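/- Let f be β-strongly convex on ℝ^d and Ω convex on ℝ^d. For points a, a⁺, a* ∈ ℝ^d, any subgradient g ∈ ∂f(a), any u ∈ ∂Ω(a⁺), and any step size α > 0, if (a* − a⁺)ᵀ(a − a⁺ − αg − αu) ≤ 0, then f(a) + Ω(a⁺) − f(a*) − Ω(a*) ≤ (1/(2α))(1 − αβ)‖a* − a‖₂² − (1/(2α))‖a* − a⁺‖₂² + (α/2)‖g‖₂². -/
import Mathlib


open scoped RealInnerProductSpace

theorem stmt_19 (d : ℕ) (hd : 1 ≤ d) (β α : ℝ) (hβ : 0 < β) (hα : 0 < α)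
    (f Ω : EuclideanSpace ℝ (Fin d) → ℝ)
    (hΩconv : ConvexOn ℝ Set.univ Ω)
    (a ap astar g u : EuclideanSpace ℝ (Fin d))
    (hf : ∀ y, f a + ⟪g, y - a⟫ + (β / 2) * ‖y - a‖ ^ 2 ≤ f y)
    (hu : ∀ y, Ω ap + ⟪u, y - ap⟫ ≤ Ω y)
    (hvar : ⟪astar - ap, a - ap - α • g - α • u⟫ ≤ 0) :
    f a + Ω ap - f astar - Ω astar ≤
      (1 / (2 * α)) * (1 - α * β) * ‖astar - a‖ ^ 2
        - (1 / (2 * α)) * ‖astar - ap‖ ^ 2 + (α / 2) * ‖g‖ ^ 2 := by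
  have h1 := hf astar
  have h2 := hu astar
  have key : (0:ℝ) ≤ ‖α • g - (a - ap)‖ ^ 2 := sq_nonneg _
  have e1 : ‖α • g - (a - ap)‖ ^ 2
      = α ^ 2 * ‖g‖ ^ 2 - 2 * α * ⟪g, a - ap⟫ + ‖a - ap‖ ^ 2 := by
    rw [@norm_sub_sq_real, norm_smul, real_inner_smul_left]
    rw [Real.norm_eq_abs, abs_of_pos hα]
    ring
  have e2 : ‖a - ap‖ ^ 2
      = ‖astar - ap‖ ^ 2 - 2 * ⟪astar - ap, astar - a⟫ + ‖astar - a‖ ^ 2 := by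
    have h : a - ap = (astar - ap) - (astar - a) := by abel
    rw [h, @norm_sub_sq_real]
  have hv : ⟪astar - ap, a - ap⟫ - α * ⟪astar - ap, g⟫ - α * ⟪astar - ap, u⟫ ≤ 0 := by
    have h := hvar
    rw [inner_sub_right, inner_sub_right, real_inner_smul_right, real_inner_smul_right] at h
    linarith
  have i1 : ⟪g, a - ap⟫ = ⟪astar - ap, g⟫ - ⟪g, astar - a⟫ := by
    have h : a - ap = (astar - ap) - (astar - a) := by abel
    rw [h, inner_sub_right, real_inner_comm g (astar - ap)]
  have i2 : ⟪astar - ap, a - ap⟫ = ‖astar - ap‖ ^ 2 - ⟪astar - ap, astar - a⟫ := by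
    have h : a - ap = (astar - ap) - (astar - a) := by abel
    rw [h, inner_sub_right, real_inner_self_eq_norm_sq]
  have i3 : ⟪u, astar - ap⟫ = ⟪astar - ap, u⟫ := real_inner_comm _ _
  have h2α : (0:ℝ) < 2 * α := by linarith
  have goal2 : 2 * α * (f a + Ω ap - f astar - Ω astar)
      ≤ (1 - α * β) * ‖astar - a‖ ^ 2 - ‖astar - ap‖ ^ 2 + α ^ 2 * ‖g‖ ^ 2 := by
    rw [e1, e2, i1] at key
    rw [i2] at hv
    rw [i3] at h2
    nlinarith [h1, h2, key, hv, hα.le]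
  have hRHS : (1 / (2 * α)) * (1 - α * β) * ‖astar - a‖ ^ 2
        - (1 / (2 * α)) * ‖astar - ap‖ ^ 2 + (α / 2) * ‖g‖ ^ 2
      = ((1 - α * β) * ‖astar - a‖ ^ 2 - ‖astar - ap‖ ^ 2 + α ^ 2 * ‖g‖ ^ 2) / (2 * α) := by
    field_simp
  rw [hRHS, le_div_iff₀ h2α]
  linarith [goal2]
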